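/- Let Φ and φ be the standard normal CDF and PDF. For any x ∈ ℝ, ∫_ℝ (1 + (|x| + |t| - |x - t|)/2) φ(t) dt = 1 + 1/√(2π) + |x|/2 - x(Φ(x) - 1/2) - φ(x). -/

import Mathlib

/-!
Split the integral at `x`. On each half-line `|x - t|` is affine in `t`, and `t φ(t) = -φ'(t)`
integrates to `∓φ(x)`, so `∫ |x - t| φ(t) dt = 2 φ(x) + x (2 Φ(x) - 1)`. The integrand is a
linear combination of `φ`, `|0 - t| φ(t)` and `|x - t| φ(t)`, and `φ(0) = 1/√(2π)`.
-/

open MeasureTheory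

noncomputable def phi (t : ℝ) : ℝ := Real.exp (-(t ^ 2) / 2) / Real.sqrt (2 * Real.pi)

noncomputable def Phi (x : ℝ) : ℝ := ∫ t in Set.Iic x, phi t

open Set Filter

section FTC

variable {E : Type*} [NormedAddCommGroup E] [NormedSpace ℝ E] [CompleteSpace E] {f f' : ℝ → E}

/- Integrability of `f` and `f'` forces `f → 0` at `±∞`, which gives the boundary terms. -/
theorem integral_Iic_of_hasDerivAt_of_integrable (hderiv : ∀ x, HasDerivAt f (f' x) x)
    (hf' : Integrable f') (hf : Integrable f) (a : ℝ) : ∫ x in Iic a, f' x = f a := by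
  have hlim : Tendsto f atBot (nhds 0) :=
    tendsto_zero_of_hasDerivAt_of_integrableOn_Iic (a := a) (fun x _ => hderiv x)
      hf'.integrableOn hf.integrableOn
  simpa using integral_Iic_of_hasDerivAt_of_tendsto' (fun x _ => hderiv x) hf'.integrableOn hlim

theorem integral_Ioi_of_hasDerivAt_of_integrable (hderiv : ∀ x, HasDerivAt f (f' x) x)
    (hf' : Integrable f') (hf : Integrable f) (a : ℝ) : ∫ x in Ioi a, f' x = -f a := by
  have hlim : Tendsto f atTop (nhds 0) :=
    tendsto_zero_of_hasDerivAt_of_integrableOn_Ioi (a := a) (fun x _ => hderiv x)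
      hf'.integrableOn hf.integrableOn
  simpa using integral_Ioi_of_hasDerivAt_of_tendsto' (fun x _ => hderiv x) hf'.integrableOn hlim

end FTC

section AbsoluteMoment

variable {g : ℝ → ℝ}

theorem integrable_abs_sub_mul (hg : Integrable g) (hg₁ : Integrable fun t => t * g t) (x : ℝ) :
    Integrable fun t => |x - t| * g t := by
  refine Integrable.mono' ((hg.const_mul |x|).norm.fun_add hg₁.norm)
    ((continuous_const.sub continuous_id).abs.aestronglyMeasurable.mul hg.aestronglyMeasurable)
    (Eventually.of_forall fun t => ?_)
  simp only [Real.norm_eq_abs, abs_mul, abs_abs]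
  nlinarith [abs_sub x t, abs_nonneg (g t)]

theorem integral_abs_sub_mul (hg : Integrable g) (hg₁ : Integrable fun t => t * g t) (x : ℝ) :
    ∫ t, |x - t| * g t = x * ((∫ t in Iic x, g t) - ∫ t in Ioi x, g t)
      + ((∫ t in Ioi x, t * g t) - ∫ t in Iic x, t * g t) := by
  have hint := integrable_abs_sub_mul hg hg₁ x
  have hIic : ∫ t in Iic x, |x - t| * g t = x * (∫ t in Iic x, g t) - ∫ t in Iic x, t * g t := by
    rw [setIntegral_congr_fun measurableSet_Iic fun t (ht : t ≤ x) => by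
      rw [abs_of_nonneg (sub_nonneg.2 ht), sub_mul], integral_sub (hg.const_mul x).integrableOn
      hg₁.integrableOn, integral_const_mul]
  have hIoi : ∫ t in Ioi x, |x - t| * g t = (∫ t in Ioi x, t * g t) - x * ∫ t in Ioi x, g t := by
    rw [setIntegral_congr_fun measurableSet_Ioi fun t (ht : x < t) => by
      rw [abs_sub_comm, abs_of_pos (sub_pos.2 ht), sub_mul], integral_sub hg₁.integrableOn
      (hg.const_mul x).integrableOn, integral_const_mul]
  rw [← intervalIntegral.integral_Iic_add_Ioi hint.integrableOn hint.integrableOn, hIic, hIoi]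
  ring

end AbsoluteMoment

theorem phi_eq_gaussianPDFReal : phi = ProbabilityTheory.gaussianPDFReal 0 1 := by
  ext t
  simp [phi, ProbabilityTheory.gaussianPDFReal, div_eq_inv_mul]

theorem integrable_phi : Integrable phi :=
  phi_eq_gaussianPDFReal ▸ ProbabilityTheory.integrable_gaussianPDFReal 0 1

theorem integral_phi : ∫ t, phi t = 1 := by
  rw [phi_eq_gaussianPDFReal]
  exact ProbabilityTheory.integral_gaussianPDFReal_eq_one 0 one_ne_zero

theorem integral_phi_Ioi (x : ℝ) : ∫ t in Ioi x, phi t = 1 - Phi x := by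
  rw [← integral_phi, ← intervalIntegral.integral_Iic_add_Ioi integrable_phi.integrableOn
    integrable_phi.integrableOn, Phi, add_sub_cancel_left]

theorem integrable_mul_phi : Integrable fun t => t * phi t := by
  refine ((integrable_mul_exp_neg_mul_sq (one_half_pos (α := ℝ))).div_const
    (Real.sqrt (2 * Real.pi))).congr (Eventually.of_forall fun t => ?_)
  show t * Real.exp (-(1 / 2) * t ^ 2) / Real.sqrt (2 * Real.pi) = t * phi t
  rw [phi]
  ring_nf

theorem hasDerivAt_phi (t : ℝ) : HasDerivAt phi (-(t * phi t)) t := by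
  have h := (((hasDerivAt_pow 2 t).fun_neg.div_const 2).exp).div_const (Real.sqrt (2 * Real.pi))
  refine h.congr_deriv ?_
  simp only [phi]
  ring

theorem integral_mul_phi_Iic (x : ℝ) : ∫ t in Iic x, t * phi t = -phi x := by
  rw [← neg_eq_iff_eq_neg, ← integral_neg]
  exact integral_Iic_of_hasDerivAt_of_integrable hasDerivAt_phi integrable_mul_phi.neg
    integrable_phi x

theorem integral_mul_phi_Ioi (x : ℝ) : ∫ t in Ioi x, t * phi t = phi x := by
  rw [← neg_inj, ← integral_neg]
  exact integral_Ioi_of_hasDerivAt_of_integrable hasDerivAt_phi integrable_mul_phi.neg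
    integrable_phi x

theorem integral_abs_sub_mul_phi (x : ℝ) :
    ∫ t, |x - t| * phi t = 2 * phi x + x * (2 * Phi x - 1) := by
  rw [integral_abs_sub_mul integrable_phi integrable_mul_phi, integral_phi_Ioi,
    integral_mul_phi_Ioi, integral_mul_phi_Iic, Phi]
  ring

theorem phi_zero : phi 0 = 1 / Real.sqrt (2 * Real.pi) := by
  simp [phi]

/-- `∫ (1 + (|x|+|t|-|x-t|)/2) φ(t) dt = 1 + 1/√(2π) + |x|/2 - x(Φ(x)-1/2) - φ(x)`. -/
theorem integral_kernel_gaussian (x : ℝ) :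
    ∫ t : ℝ, (1 + (|x| + |t| - |x - t|) / 2) * phi t
      = 1 + 1 / Real.sqrt (2 * Real.pi) + |x| / 2 - x * (Phi x - 1 / 2) - phi x := by
  have habs (y : ℝ) := integrable_abs_sub_mul integrable_phi integrable_mul_phi y
  calc ∫ t : ℝ, (1 + (|x| + |t| - |x - t|) / 2) * phi t
      = ∫ t : ℝ, ((1 + |x| / 2) * phi t + |0 - t| * phi t / 2) - |x - t| * phi t / 2 := by
        congr 1 with t
        rw [zero_sub, abs_neg]
        ring
    _ = (1 + |x| / 2) * (∫ t, phi t) + (∫ t, |0 - t| * phi t) / 2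
          - (∫ t, |x - t| * phi t) / 2 := by
        rw [integral_sub ((integrable_phi.const_mul _).fun_add ((habs 0).div_const 2))
          ((habs x).div_const 2), integral_add (integrable_phi.const_mul _) ((habs 0).div_const 2),
          integral_const_mul, integral_div, integral_div]
    _ = _ := by
        rw [integral_phi, integral_abs_sub_mul_phi, integral_abs_sub_mul_phi, phi_zero]
        ring
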